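/- arXiv:2602.03363 — 2 statements merged into one kernel-verified Lean document; each statement's English description precedes it below -/
import Mathlib

section
/- Let n ≥ 1 and let h ∈ Γ_n be nonzero and span an extreme ray of Γ_n. Then h is modular or tight: either h(A) = Σ_{i∈A} h({i}) for every A ⊆ N_n, or h(N_n) = h(N_n \ {i}) for every i ∈ N_n. -/
/-!
If `h` is not tight, some `i` has `c = h(N) - h(N \ {i}) > 0`. By submodularity every increment
`h(A ∪ {i}) - h(A)` is at least `c`, so `h` splits in `Γ_n` as `(h - c·δᵢ) + c·δᵢ` with
`δᵢ(A) = [i ∈ A]`. Extremality makes `h` a multiple of the modular function `δᵢ`.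
-/

open Finset

/-- Shannon entropy (natural log) of the random variable `X : Ω → S`
under the probability mass function `p : Ω → ℝ`. -/
noncomputable def Hent {Ω S : Type} [Fintype Ω] [DecidableEq S]
    (p : Ω → ℝ) (X : Ω → S) : ℝ :=
  ∑ s ∈ Finset.univ.image X,
    Real.negMulLog (∑ ω ∈ Finset.univ.filter (fun ω => X ω = s), p ω)

/-- The joint random variable `(X_i)_{i ∈ A}`. -/
def joint {Ω : Type} {n : ℕ} (X : Fin n → Ω → ℕ) (A : Finset (Fin n)) :
    Ω → (A → ℕ) :=
  fun ω i => X i ω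

/-- A set function `h : 2^{N_n} → ℝ` is entropic if it is the entropy function of
some random vector `(X_1, …, X_n)` on a finite probability space. -/
def IsEntropic {n : ℕ} (h : Finset (Fin n) → ℝ) : Prop :=
  ∃ (N : ℕ) (p : Fin N → ℝ) (X : Fin n → Fin N → ℕ),
    (∀ ω, 0 ≤ p ω) ∧ (∑ ω, p ω) = 1 ∧
    ∀ A : Finset (Fin n), h A = Hent p (joint X A)

/-- The polymatroidal region Γ_n. -/
def PolymatroidRegion (n : ℕ) : Set (Finset (Fin n) → ℝ) :=
  {h | h ∅ = 0 ∧ (∀ A, 0 ≤ h A) ∧ (∀ A B, A ⊆ B → h A ≤ h B) ∧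
       (∀ A B, h (A ∩ B) + h (A ∪ B) ≤ h A + h B)}

/-- A nonzero `h ∈ Γ_n` spans an extreme ray of `Γ_n` if whenever `h₁, h₂ ∈ Γ_n` and
`h₁ + h₂` is a nonnegative multiple of `h`, both `h₁` and `h₂` are nonnegative
multiples of `h`. -/
def SpansExtremeRay {n : ℕ} (h : Finset (Fin n) → ℝ) : Prop :=
  h ∈ PolymatroidRegion n ∧ h ≠ 0 ∧
  ∀ h₁ h₂ : Finset (Fin n) → ℝ, h₁ ∈ PolymatroidRegion n → h₂ ∈ PolymatroidRegion n →
    (∃ c : ℝ, 0 ≤ c ∧ h₁ + h₂ = c • h) →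
    (∃ c₁ : ℝ, 0 ≤ c₁ ∧ h₁ = c₁ • h) ∧ (∃ c₂ : ℝ, 0 ≤ c₂ ∧ h₂ = c₂ • h)

/-- `F ⊆ Γ_n` is a face of `Γ_n` if whenever `h₁, h₂ ∈ Γ_n` and `h₁ + h₂ ∈ F`,
both `h₁` and `h₂` lie in `F`. -/
def IsFace (n : ℕ) (F : Set (Finset (Fin n) → ℝ)) : Prop :=
  F ⊆ PolymatroidRegion n ∧
  ∀ h₁ h₂ : Finset (Fin n) → ℝ, h₁ ∈ PolymatroidRegion n → h₂ ∈ PolymatroidRegion n →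
    h₁ + h₂ ∈ F → h₁ ∈ F ∧ h₂ ∈ F

/-- A matroid on ground set `N_n`, given by its rank function. -/
structure MatroidRk (n : ℕ) where
  r : Finset (Fin n) → ℕ
  le_card : ∀ A, r A ≤ A.card
  mono : ∀ ⦃A B : Finset (Fin n)⦄, A ⊆ B → r A ≤ r B
  submod : ∀ A B : Finset (Fin n), r (A ∩ B) + r (A ∪ B) ≤ r A + r B

/-- The rank function of a matroid, viewed as a real-valued set function. -/
def MatroidRk.rr {n : ℕ} (M : MatroidRk n) : Finset (Fin n) → ℝ :=
  fun A => (M.r A : ℝ)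

/-- A set is independent if its rank equals its cardinality. -/
def MatroidRk.Indep {n : ℕ} (M : MatroidRk n) (A : Finset (Fin n)) : Prop :=
  M.r A = A.card

/-- A circuit is a minimal dependent set. -/
def MatroidRk.IsCircuit {n : ℕ} (M : MatroidRk n) (C : Finset (Fin n)) : Prop :=
  ¬ M.Indep C ∧ ∀ A ⊂ C, M.Indep A

/-- An element is a loop if its rank is zero. -/
def MatroidRk.IsLoop {n : ℕ} (M : MatroidRk n) (e : Fin n) : Prop :=
  M.r {e} = 0

/-- Two distinct elements are parallel if each has rank one and together they have rank one. -/
def MatroidRk.Parallel {n : ℕ} (M : MatroidRk n) (e f : Fin n) : Prop :=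
  e ≠ f ∧ M.r {e} = 1 ∧ M.r {f} = 1 ∧ M.r {e, f} = 1

/-- The subset `{1, …, k}` of `N_n` (in `Fin n`, the elements with value `< k`). -/
def alphaSet (n k : ℕ) : Finset (Fin n) :=
  Finset.univ.filter (fun i => (i : ℕ) < k)

/-- The rank function of the rank-one matroid `U_{1,k}^n`:
`A ↦ 1` if `A ∩ {1, …, k} ≠ ∅` and `0` otherwise. -/
def rUone (n k : ℕ) : Finset (Fin n) → ℝ :=
  fun A => if (A ∩ alphaSet n k).Nonempty then 1 else 0

/-- The rank function of the uniform matroid `U_{n-1,n}`: `A ↦ min (n-1) |A|`. -/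
def rUnif (n : ℕ) : Finset (Fin n) → ℝ :=
  fun A => ((min (n - 1) A.card : ℕ) : ℝ)

/-- The p-characteristic set `χ_M` of a matroid `M`. -/
def chi {n : ℕ} (M : MatroidRk n) : Set ℤ :=
  {v | 2 ≤ v ∧ IsEntropic (fun A => Real.log (v : ℝ) * M.rr A)}

def memIndicator {α : Type*} [DecidableEq α] (i : α) (A : Finset α) : ℝ :=
  if i ∈ A then 1 else 0

section Indicator

variable {α : Type*} [DecidableEq α]

theorem memIndicator_inter_add_union (i : α) (A B : Finset α) :
    memIndicator i (A ∩ B) + memIndicator i (A ∪ B) = memIndicator i A + memIndicator i B := by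
  by_cases hA : i ∈ A <;> by_cases hB : i ∈ B <;> simp [memIndicator, hA, hB]

theorem memIndicator_nonneg (i : α) (A : Finset α) : 0 ≤ memIndicator i A := by
  unfold memIndicator; split_ifs <;> norm_num

theorem memIndicator_mono (i : α) {A B : Finset α} (hAB : A ⊆ B) :
    memIndicator i A ≤ memIndicator i B := by
  by_cases hA : i ∈ A
  · simp [memIndicator, hA, hAB hA]
  · simpa [memIndicator, hA] using memIndicator_nonneg i B

theorem memIndicator_eq_sum_singleton (i : α) (A : Finset α) :
    memIndicator i A = ∑ j ∈ A, memIndicator i {j} := by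
  simp only [memIndicator, mem_singleton, sum_ite_eq]

theorem smul_memIndicator_eq_sum_singleton (c : ℝ) (i : α) (A : Finset α) :
    (c • memIndicator i) A = ∑ j ∈ A, (c • memIndicator i) {j} := by
  simp only [Pi.smul_apply, smul_eq_mul, ← mul_sum, ← memIndicator_eq_sum_singleton]

end Indicator

section Polymatroid

variable {n : ℕ}

theorem smul_memIndicator_mem_polymatroidRegion {c : ℝ} (hc : 0 ≤ c) (i : Fin n) :
    c • memIndicator i ∈ PolymatroidRegion n := by
  refine ⟨by simp [memIndicator], fun A => ?_, fun A B hAB => ?_, fun A B => ?_⟩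
  · exact mul_nonneg hc (memIndicator_nonneg i A)
  · exact mul_le_mul_of_nonneg_left (memIndicator_mono i hAB) hc
  · simp only [Pi.smul_apply, smul_eq_mul, ← mul_add, memIndicator_inter_add_union, le_refl]

theorem sub_erase_univ_le_sub_insert {h : Finset (Fin n) → ℝ} (hh : h ∈ PolymatroidRegion n)
    {i : Fin n} {A : Finset (Fin n)} (hiA : i ∉ A) :
    h univ - h (univ.erase i) ≤ h (insert i A) - h A := by
  have hinter : insert i A ∩ univ.erase i = A := by
    ext x; by_cases hx : x = i <;> simp [hx, hiA]
  have hunion : insert i A ∪ univ.erase i = univ := by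
    ext x; by_cases hx : x = i <;> simp [hx]
  have := hh.2.2.2 (insert i A) (univ.erase i)
  rw [hinter, hunion] at this
  linarith

theorem sub_smul_memIndicator_mem_polymatroidRegion {h : Finset (Fin n) → ℝ}
    (hh : h ∈ PolymatroidRegion n) (i : Fin n) :
    h - (h univ - h (univ.erase i)) • memIndicator i ∈ PolymatroidRegion n := by
  obtain ⟨h0, -, hmono, hsub⟩ := id hh
  set c := h univ - h (univ.erase i)
  have hmono' : ∀ A B, A ⊆ B → (h - c • memIndicator i) A ≤ (h - c • memIndicator i) B := by
    intro A B hAB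
    simp only [Pi.sub_apply, Pi.smul_apply, smul_eq_mul, memIndicator]
    by_cases hA : i ∈ A
    · simp only [hA, hAB hA, if_true]; linarith [hmono A B hAB]
    by_cases hB : i ∈ B
    · simp only [hA, hB, if_true, if_false]
      linarith [sub_erase_univ_le_sub_insert hh hA,
        hmono _ _ (insert_subset hB hAB)]
    · simp only [hA, hB, if_false]; linarith [hmono A B hAB]
  have h0' : (h - c • memIndicator i) ∅ = 0 := by simp [memIndicator, h0]
  refine ⟨h0', fun A => h0' ▸ hmono' ∅ A (empty_subset A), hmono', fun A B => ?_⟩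
  simp only [Pi.sub_apply, Pi.smul_apply, smul_eq_mul]
  linear_combination hsub A B - c * memIndicator_inter_add_union i A B

theorem SpansExtremeRay.exists_eq_smul {h g : Finset (Fin n) → ℝ} (hext : SpansExtremeRay h)
    (hg : g ∈ PolymatroidRegion n) (hhg : h - g ∈ PolymatroidRegion n) (hg0 : g ≠ 0) :
    ∃ a : ℝ, h = a • g := by
  obtain ⟨c, -, hc⟩ := (hext.2.2 _ _ hhg hg ⟨1, zero_le_one, by simp⟩).2
  have hc0 : c ≠ 0 := by rintro rfl; exact hg0 (by simpa using hc)
  exact ⟨c⁻¹, by rw [hc, smul_smul, inv_mul_cancel₀ hc0, one_smul]⟩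

end Polymatroid

theorem stmt0_general (n : ℕ) (h : Finset (Fin n) → ℝ)
    (hext : SpansExtremeRay h) :
    (∀ A : Finset (Fin n), h A = ∑ i ∈ A, h {i}) ∨
    (∀ i : Fin n, h Finset.univ = h (Finset.univ.erase i)) := by
  refine or_iff_not_imp_right.2 fun htight => ?_
  push Not at htight
  obtain ⟨i, hi⟩ := htight
  have hh := hext.1
  set c := h univ - h (univ.erase i)
  have hc : 0 < c := sub_pos.2 <| (hh.2.2.1 _ _ (erase_subset i univ)).lt_of_ne' hi
  have hc0 : c • memIndicator i ≠ 0 := fun h0 => by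
    simpa [memIndicator, hc.ne'] using congrFun h0 {i}
  obtain ⟨a, ha⟩ := hext.exists_eq_smul (smul_memIndicator_mem_polymatroidRegion hc.le i)
    (sub_smul_memIndicator_mem_polymatroidRegion hh i) hc0
  rw [ha, smul_smul]
  exact smul_memIndicator_eq_sum_singleton _ i

/-- any nonzero `h` spanning an extreme ray of `Γ_n` is modular or tight. -/
theorem stmt0 (n : ℕ) (hn : 1 ≤ n) (h : Finset (Fin n) → ℝ)
    (hext : SpansExtremeRay h) :
    (∀ A : Finset (Fin n), h A = ∑ i ∈ A, h {i}) ∨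
    (∀ i : Fin n, h Finset.univ = h (Finset.univ.erase i)) :=
  stmt0_general n h hext
end

section
/- Let M be a matroid on N_n with r_M(N_n) ≥ 2 whose rank function spans an extreme ray of Γ_n, and let a, b > 0. If a·r_M + b·r_{U_{1,1}^n} is entropic, then a = log v for some integer v ≥ 2. -/
open Finset

open Real

/-!
If every circuit of `M` had at most two elements, `r_M` would be the sum, over the parallel
classes `K` of `M`, of the rank-one polymatroids `A ↦ [A ∩ K ≠ ∅]`; as `r_M` spans an extreme ray
and has rank at least two, `M` has a circuit `C` with `|C| ≥ 3`. Take `i ≠ j` in `C`, both different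
from the element `1`, and `A = C \ {i, j}`. Adding `i` or `j` does not change `r_{U_{1,1}^n}`, so on
the sets generated by `A`, `{i}`, `{j}` the entropy function behaves like `a r_M`: the variables
`X_A`, `X_i`, `X_j` are pairwise independent and each of `X_i`, `X_j` is a function of the other
two. Given `X_A`, the values of `X_i` and `X_j` thus correspond bijectively, and independence from
`X_A` gives `P(X_i = s) = P(X_j = t)` whenever `(s, t)` occurs together; by independence of `X_i`
and `X_j` every pair of values does. So `X_j` is uniform on some `v` values and
`a = H(X_j) = log v`, with `v ≥ 2` because `a > 0`.
-/

section Entropy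

variable {Ω α β γ : Type} [Fintype Ω] [DecidableEq α] [DecidableEq β] [DecidableEq γ]
  {p : Ω → ℝ}

noncomputable def probEq (p : Ω → ℝ) (Y : Ω → α) (y : α) : ℝ :=
  ∑ ω ∈ univ.filter (fun ω => Y ω = y), p ω

lemma probEq_nonneg (hp : ∀ ω, 0 ≤ p ω) (Y : Ω → α) (y : α) : 0 ≤ probEq p Y y :=
  sum_nonneg fun ω _ => hp ω

lemma probEq_pos (hp : ∀ ω, 0 ≤ p ω) (Y : Ω → α) {ω : Ω} (hω : 0 < p ω) :
    0 < probEq p Y (Y ω) :=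
  hω.trans_le (single_le_sum (fun ω _ => hp ω) (by simp))

lemma exists_pos_of_probEq_pos {Y : Ω → α} {y : α} (h : 0 < probEq p Y y) :
    ∃ ω, 0 < p ω ∧ Y ω = y := by
  obtain ⟨ω, hω, hpos⟩ := exists_lt_of_sum_lt (f := fun _ => (0 : ℝ)) (by simpa [probEq] using h)
  exact ⟨ω, hpos, (mem_filter.1 hω).2⟩

lemma probEq_eq_zero (hp : ∀ ω, 0 ≤ p ω) {Y : Ω → α} {y : α}
    (h : ∀ ω, 0 < p ω → Y ω ≠ y) : probEq p Y y = 0 := by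
  refine le_antisymm (not_lt.1 fun hpos => ?_) (probEq_nonneg hp Y y)
  obtain ⟨ω, hω, hY⟩ := exists_pos_of_probEq_pos hpos
  exact h ω hω hY

lemma probEq_congr (hp : ∀ ω, 0 ≤ p ω) {Y : Ω → α} {Z : Ω → β} {y : α} {z : β}
    (h : ∀ ω, 0 < p ω → (Y ω = y ↔ Z ω = z)) : probEq p Y y = probEq p Z z := by
  simp only [probEq, sum_filter]
  refine sum_congr rfl fun ω _ => ?_
  rcases (hp ω).eq_or_lt with h0 | hpos
  · simp [← h0]
  · simp only [h ω hpos]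

lemma sum_probEq (hp : ∀ ω, 0 ≤ p ω) (Y : Ω → α) {s : Finset α}
    (hs : ∀ ω, 0 < p ω → Y ω ∈ s) : ∑ y ∈ s, probEq p Y y = ∑ ω, p ω := by
  simp only [probEq]
  rw [sum_fiberwise_eq_sum_filter, sum_filter]
  refine sum_congr rfl fun ω _ => ?_
  split_ifs with h
  · rfl
  · exact (hp ω).eq_or_lt.resolve_right (mt (hs ω) h)

lemma Hent_eq_neg_sum (Y : Ω → α) :
    Hent p Y = -∑ ω, p ω * log (probEq p Y (Y ω)) := by
  rw [← sum_fiberwise_of_maps_to (t := univ.image Y) fun ω _ => mem_image_of_mem Y (mem_univ ω),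
    ← sum_neg_distrib]
  refine sum_congr rfl fun y _ => ?_
  have hfib : ∀ ω ∈ univ.filter (fun ω => Y ω = y),
      p ω * log (probEq p Y (Y ω)) = p ω * log (probEq p Y y) := fun ω hω => by
    rw [(mem_filter.1 hω).2]
  rw [sum_congr rfl hfib, ← sum_mul, Real.negMulLog, neg_mul]
  rfl

lemma Hent_congr (hp : ∀ ω, 0 ≤ p ω) {Y : Ω → α} {Z : Ω → β}
    (h : ∀ ω ω', Y ω = Y ω' ↔ Z ω = Z ω') : Hent p Y = Hent p Z := by
  simp only [Hent_eq_neg_sum, probEq_congr hp fun ω' _ => h ω' _]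

lemma sum_mul_div_probEq_le (hp : ∀ ω, 0 ≤ p ω) (Y : Ω → α) {g : α → ℝ} (hg : ∀ y, 0 ≤ g y) :
    ∑ ω, p ω * (g (Y ω) / probEq p Y (Y ω)) ≤ ∑ y ∈ univ.image Y, g y := by
  rw [← sum_fiberwise_of_maps_to (t := univ.image Y) fun ω _ => mem_image_of_mem Y (mem_univ ω)]
  refine sum_le_sum fun y _ => ?_
  have hfib : ∀ ω ∈ univ.filter (fun ω => Y ω = y),
      p ω * (g (Y ω) / probEq p Y (Y ω)) = p ω * (g y / probEq p Y y) := fun ω hω => by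
    rw [(mem_filter.1 hω).2]
  rw [sum_congr rfl hfib, ← sum_mul]
  change probEq p Y y * (g y / probEq p Y y) ≤ g y
  rcases (probEq_nonneg hp Y y).eq_or_lt with h0 | hpos
  · simp [← h0, hg y]
  · rw [mul_div_cancel₀ _ hpos.ne']


lemma eq_one_of_sum_mul_log_eq_zero {ι : Type*} [Fintype ι] {w x : ι → ℝ}
    (hw : ∀ i, 0 ≤ w i) (hx : ∀ i, 0 < w i → 0 < x i) (hsum : ∑ i, w i * x i ≤ ∑ i, w i)
    (hlog : ∑ i, w i * log (x i) = 0) {i : ι} (hi : 0 < w i) : x i = 1 := by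
  have hterm : ∀ i, 0 ≤ w i * (x i - 1 - log (x i)) := fun i => by
    rcases (hw i).eq_or_lt with h | h
    · simp [← h]
    · exact mul_nonneg h.le (by linarith [log_le_sub_one_of_pos (hx i h)])
  have hzero : ∑ i, w i * (x i - 1 - log (x i)) = 0 := by
    refine le_antisymm ?_ (sum_nonneg fun i _ => hterm i)
    simp only [mul_sub, mul_one, sum_sub_distrib, hlog]
    linarith
  have hi0 := (sum_eq_zero_iff_of_nonneg fun i _ => hterm i).1 hzero i (mem_univ i)
  by_contra hne
  have := log_lt_sub_one_of_pos (hx i hi) hne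
  have : 0 < w i * (x i - 1 - log (x i)) := mul_pos hi (by linarith)
  linarith

lemma probEq_pair_eq_of_Hent_pair_eq (hp : ∀ ω, 0 ≤ p ω) {Y : Ω → α} {Z : Ω → β}
    (h : Hent p (fun ω => (Y ω, Z ω)) = Hent p Y) {ω : Ω} (hω : 0 < p ω) :
    probEq p (fun ω => (Y ω, Z ω)) (Y ω, Z ω) = probEq p Y (Y ω) := by
  set YZ := fun ω => (Y ω, Z ω)
  have hle : ∀ ω, probEq p YZ (YZ ω) ≤ probEq p Y (Y ω) := fun ω =>
    sum_le_sum_of_subset_of_nonneg (fun ω' => by simp +contextual [YZ]) fun ω _ _ => hp ω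
  have hlog : ∑ ω, p ω * log (probEq p YZ (YZ ω) / probEq p Y (Y ω)) = 0 := by
    have hsplit : ∀ ω, p ω * log (probEq p YZ (YZ ω) / probEq p Y (Y ω)) =
        p ω * log (probEq p YZ (YZ ω)) - p ω * log (probEq p Y (Y ω)) := fun ω => by
      rcases (hp ω).eq_or_lt with h0 | hpos
      · simp [← h0]
      · rw [log_div (probEq_pos hp YZ hpos).ne' (probEq_pos hp Y hpos).ne', mul_sub]
    simp only [hsplit, sum_sub_distrib]
    linarith [Hent_eq_neg_sum (p := p) YZ, Hent_eq_neg_sum (p := p) Y]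
  have hsum : ∑ ω, p ω * (probEq p YZ (YZ ω) / probEq p Y (Y ω)) ≤ ∑ ω, p ω :=
    sum_le_sum fun ω _ => mul_le_of_le_one_right (hp ω)
      (div_le_one_of_le₀ (hle ω) (probEq_nonneg hp Y _))
  have heq := eq_one_of_sum_mul_log_eq_zero hp
    (fun ω hω => div_pos (probEq_pos hp YZ hω) (probEq_pos hp Y hω)) hsum hlog hω
  exact (div_eq_one_iff_eq (probEq_pos hp Y hω).ne').1 heq

lemma eq_of_Hent_pair_eq (hp : ∀ ω, 0 ≤ p ω) {Y : Ω → α} {Z : Ω → β}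
    (h : Hent p (fun ω => (Y ω, Z ω)) = Hent p Y) {ω ω' : Ω} (hω : 0 < p ω) (hω' : 0 < p ω')
    (hY : Y ω' = Y ω) : Z ω' = Z ω := by
  classical
  by_contra hZ
  have hsub : insert ω' (univ.filter fun ω'' => (Y ω'', Z ω'') = (Y ω, Z ω)) ⊆
      univ.filter fun ω'' => Y ω'' = Y ω := by
    intro ω'' h
    simp only [mem_insert, mem_filter, mem_univ, true_and] at h ⊢
    rcases h with rfl | h
    exacts [hY, congrArg Prod.fst h]
  have := sum_le_sum_of_subset_of_nonneg hsub fun ω _ _ => hp ω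
  rw [sum_insert (by simp [hZ])] at this
  change p ω' + probEq p (fun ω => (Y ω, Z ω)) (Y ω, Z ω) ≤ probEq p Y (Y ω) at this
  linarith [probEq_pair_eq_of_Hent_pair_eq hp h hω]

lemma probEq_pair_eq_mul_of_pos (hp : ∀ ω, 0 ≤ p ω) (hs : ∑ ω, p ω = 1)
    {Y : Ω → α} {Z : Ω → β}
    (h : Hent p (fun ω => (Y ω, Z ω)) = Hent p Y + Hent p Z) {ω : Ω} (hω : 0 < p ω) :
    probEq p (fun ω => (Y ω, Z ω)) (Y ω, Z ω) = probEq p Y (Y ω) * probEq p Z (Z ω) := by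
  set YZ := fun ω => (Y ω, Z ω)
  set g : α × β → ℝ := fun u => probEq p Y u.1 * probEq p Z u.2
  set x := fun ω => g (YZ ω) / probEq p YZ (YZ ω)
  have hlog : ∑ ω, p ω * log (x ω) = 0 := by
    have hsplit : ∀ ω, p ω * log (x ω) = p ω * log (probEq p Y (Y ω)) +
        p ω * log (probEq p Z (Z ω)) - p ω * log (probEq p YZ (YZ ω)) := fun ω => by
      rcases (hp ω).eq_or_lt with h0 | hpos
      · simp [← h0]
      · simp only [x, g]
        rw [log_div (mul_pos (probEq_pos hp Y hpos) (probEq_pos hp Z hpos)).ne'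
          (probEq_pos hp YZ hpos).ne', log_mul (probEq_pos hp Y hpos).ne'
          (probEq_pos hp Z hpos).ne']
        ring
    simp only [hsplit, sum_sub_distrib, sum_add_distrib]
    linarith [Hent_eq_neg_sum (p := p) YZ, Hent_eq_neg_sum (p := p) Y, Hent_eq_neg_sum (p := p) Z]
  have hsum : ∑ ω, p ω * x ω ≤ ∑ ω, p ω := calc
    ∑ ω, p ω * x ω ≤ ∑ u ∈ univ.image YZ, g u :=
      sum_mul_div_probEq_le hp YZ fun u => mul_nonneg (probEq_nonneg hp Y _) (probEq_nonneg hp Z _)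
    _ ≤ ∑ u ∈ univ.image Y ×ˢ univ.image Z, g u :=
      sum_le_sum_of_subset_of_nonneg (fun u => by aesop)
        fun u _ _ => mul_nonneg (probEq_nonneg hp Y _) (probEq_nonneg hp Z _)
    _ = ∑ ω, p ω := by
      rw [sum_product, ← sum_mul_sum, sum_probEq hp Y (by simp), sum_probEq hp Z (by simp), hs,
        one_mul]
  have heq := eq_one_of_sum_mul_log_eq_zero hp
    (fun ω hω => div_pos (mul_pos (probEq_pos hp Y hω) (probEq_pos hp Z hω)) (probEq_pos hp YZ hω))
    hsum hlog hω
  exact ((div_eq_one_iff_eq (probEq_pos hp YZ hω).ne').1 heq).symm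

lemma probEq_pair_eq_mul (hp : ∀ ω, 0 ≤ p ω) (hs : ∑ ω, p ω = 1) {Y : Ω → α} {Z : Ω → β}
    (h : Hent p (fun ω => (Y ω, Z ω)) = Hent p Y + Hent p Z) (y : α) (z : β) :
    probEq p (fun ω => (Y ω, Z ω)) (y, z) = probEq p Y y * probEq p Z z := by
  have hle : ∀ u : α × β, probEq p (fun ω => (Y ω, Z ω)) u ≤ probEq p Y u.1 * probEq p Z u.2 := by
    rintro ⟨y, z⟩
    by_cases hyz : ∃ ω, 0 < p ω ∧ Y ω = y ∧ Z ω = z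
    · obtain ⟨ω, hω, rfl, rfl⟩ := hyz
      exact (probEq_pair_eq_mul_of_pos hp hs h hω).le
    · push Not at hyz
      rw [probEq_eq_zero hp fun ω hω he => hyz ω hω (congrArg Prod.fst he) (congrArg Prod.snd he)]
      exact mul_nonneg (probEq_nonneg hp Y y) (probEq_nonneg hp Z z)
  -- `s` contains `(y, z)` and still carries total mass one under both sides
  set s := insert y (univ.image Y) ×ˢ insert z (univ.image Z)
  have hsum : ∑ u ∈ s, probEq p (fun ω => (Y ω, Z ω)) u =
      ∑ u ∈ s, probEq p Y u.1 * probEq p Z u.2 := by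
    rw [sum_probEq hp _ (by simp [s]), sum_product, ← sum_mul_sum, sum_probEq hp Y (by simp),
      sum_probEq hp Z (by simp), hs, one_mul]
  exact (sum_eq_sum_iff_of_le fun u _ => hle u).1 hsum (y, z) (by simp [s])

lemma Hent_eq_log_card_of_probEq_eq (hp : ∀ ω, 0 ≤ p ω) (hs : ∑ ω, p ω = 1) {V : Ω → α}
    (h : ∀ ω ω', 0 < p ω → 0 < p ω' → probEq p V (V ω) = probEq p V (V ω')) :
    Hent p V = log ((univ.filter fun ω => 0 < p ω).image V).card := by
  obtain ⟨ω₀, hω₀⟩ : ∃ ω, 0 < p ω := by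
    by_contra! h0
    have : ∑ ω, p ω ≤ 0 := sum_nonpos fun ω _ => h0 ω
    linarith
  set c := probEq p V (V ω₀)
  have hc : ∀ ω, p ω * log (probEq p V (V ω)) = p ω * log c := fun ω => by
    rcases (hp ω).eq_or_lt with h0 | hpos
    · simp [← h0]
    · rw [h ω ω₀ hpos hω₀]
  have hcard : (((univ.filter fun ω => 0 < p ω).image V).card : ℝ) * c = 1 := by
    rw [← hs, ← sum_probEq hp V fun ω hω => mem_image_of_mem V (mem_filter.2 ⟨mem_univ ω, hω⟩),
      ← nsmul_eq_mul, ← sum_const]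
    refine sum_congr rfl fun t ht => ?_
    obtain ⟨ω, hω, rfl⟩ := mem_image.1 ht
    exact h ω₀ ω hω₀ (by simpa using hω)
  rw [Hent_eq_neg_sum, sum_congr rfl fun ω _ => hc ω, ← sum_mul, hs, one_mul,
    eq_inv_of_mul_eq_one_left hcard, log_inv]

theorem exists_Hent_eq_log (hp : ∀ ω, 0 ≤ p ω) (hs : ∑ ω, p ω = 1)
    {W : Ω → α} {U : Ω → β} {V : Ω → γ}
    (hWU : Hent p (fun ω => (W ω, U ω)) = Hent p W + Hent p U)
    (hWV : Hent p (fun ω => (W ω, V ω)) = Hent p W + Hent p V)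
    (hUV : Hent p (fun ω => (U ω, V ω)) = Hent p U + Hent p V)
    (hV : Hent p (fun ω => ((W ω, U ω), V ω)) = Hent p (fun ω => (W ω, U ω)))
    (hU : Hent p (fun ω => ((W ω, V ω), U ω)) = Hent p (fun ω => (W ω, V ω))) :
    ∃ v : ℕ, Hent p V = log v := by
  -- `U` and `V` determine each other given `W`, and both are independent of `W`
  have hsame : ∀ ω, 0 < p ω → probEq p U (U ω) = probEq p V (V ω) := by
    intro ω hω
    have hfib : probEq p (fun ω => (W ω, U ω)) (W ω, U ω) =
        probEq p (fun ω => (W ω, V ω)) (W ω, V ω) := by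
      refine probEq_congr hp fun ω' hω' => ?_
      simp only [Prod.ext_iff]
      exact ⟨fun h => ⟨h.1, eq_of_Hent_pair_eq hp hV hω hω' (Prod.ext h.1 h.2)⟩,
        fun h => ⟨h.1, eq_of_Hent_pair_eq hp hU hω hω' (Prod.ext h.1 h.2)⟩⟩
    rw [probEq_pair_eq_mul hp hs hWU, probEq_pair_eq_mul hp hs hWV] at hfib
    exact mul_left_cancel₀ (probEq_pos hp W hω).ne' hfib
  refine ⟨_, Hent_eq_log_card_of_probEq_eq hp hs fun ω ω' hω hω' => ?_⟩
  -- independence of `U` and `V` realises every pair of their values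
  obtain ⟨ω'', hω'', hUV''⟩ : ∃ ω'', 0 < p ω'' ∧ (U ω'', V ω'') = (U ω, V ω') := by
    refine exists_pos_of_probEq_pos ?_
    rw [probEq_pair_eq_mul hp hs hUV]
    exact mul_pos (probEq_pos hp U hω) (probEq_pos hp V hω')
  obtain ⟨hU'', hV''⟩ := Prod.mk.inj hUV''
  calc probEq p V (V ω) = probEq p U (U ω'') := by rw [hU'', hsame ω hω]
    _ = probEq p V (V ω') := by rw [hsame ω'' hω'', hV'']

end Entropy

section Joint

variable {Ω : Type} {n : ℕ}

lemma joint_eq_joint_iff {X : Fin n → Ω → ℕ} {S : Finset (Fin n)} {ω ω' : Ω} :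
    joint X S ω = joint X S ω' ↔ ∀ k ∈ S, X k ω = X k ω' := by
  simp [joint, funext_iff]

variable [Fintype Ω] {p : Ω → ℝ}

lemma Hent_pair_joint (hp : ∀ ω, 0 ≤ p ω) (X : Fin n → Ω → ℕ) (S T : Finset (Fin n)) :
    Hent p (fun ω => (joint X S ω, joint X T ω)) = Hent p (joint X (S ∪ T)) :=
  Hent_congr hp fun ω ω' => by
    simp only [Prod.ext_iff, joint_eq_joint_iff, mem_union, or_imp, forall_and]

lemma Hent_pair_pair_joint (hp : ∀ ω, 0 ≤ p ω) (X : Fin n → Ω → ℕ) (S T R : Finset (Fin n)) :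
    Hent p (fun ω => ((joint X S ω, joint X T ω), joint X R ω)) =
      Hent p (joint X (S ∪ T ∪ R)) :=
  Hent_congr hp fun ω ω' => by
    simp only [Prod.ext_iff, joint_eq_joint_iff, mem_union, or_imp, forall_and]

end Joint

/-- The entropy profile of `(X_A, X_i, X_j)` when the three are pairwise independent and each of
`X_i`, `X_j` is a function of the other two. -/
structure IsCircuitPattern {n : ℕ} (h : Finset (Fin n) → ℝ) (A : Finset (Fin n)) (i j : Fin n) :
    Prop where
  union_left : h (A ∪ {i}) = h A + h {i}
  union_right : h (A ∪ {j}) = h A + h {j}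
  pair : h ({i} ∪ {j}) = h {i} + h {j}
  spans_right : h (A ∪ {i} ∪ {j}) = h (A ∪ {i})
  spans_left : h (A ∪ {j} ∪ {i}) = h (A ∪ {j})

namespace IsCircuitPattern

variable {n : ℕ} {h h' : Finset (Fin n) → ℝ} {A : Finset (Fin n)} {i j : Fin n}

lemma linear_comb (hh : IsCircuitPattern h A i j) (hh' : IsCircuitPattern h' A i j) (a b : ℝ) :
    IsCircuitPattern (fun S => a * h S + b * h' S) A i j where
  union_left := by linear_combination a * hh.union_left + b * hh'.union_left
  union_right := by linear_combination a * hh.union_right + b * hh'.union_right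
  pair := by linear_combination a * hh.pair + b * hh'.pair
  spans_right := by linear_combination a * hh.spans_right + b * hh'.spans_right
  spans_left := by linear_combination a * hh.spans_left + b * hh'.spans_left

theorem exists_eq_log (hpat : IsCircuitPattern h A i j) (hent : IsEntropic h) :
    ∃ v : ℕ, h {j} = log v := by
  obtain ⟨N, p, X, hp, hs, hX⟩ := hent
  obtain rfl : h = fun S => Hent p (joint X S) := funext hX
  refine exists_Hent_eq_log hp hs (W := joint X A) (U := joint X {i}) ?_ ?_ ?_ ?_ ?_ <;>
    simp only [Hent_pair_pair_joint hp, Hent_pair_joint hp]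
  exacts [hpat.union_left, hpat.union_right, hpat.pair, hpat.spans_right, hpat.spans_left]

end IsCircuitPattern

lemma rUone_union_singleton {n k : ℕ} {i : Fin n} (hi : i ∉ alphaSet n k) (S : Finset (Fin n)) :
    rUone n k (S ∪ {i}) = rUone n k S := by
  simp only [rUone, union_inter_distrib_right, singleton_inter_of_notMem hi, union_empty]

lemma rUone_singleton {n k : ℕ} {i : Fin n} (hi : i ∉ alphaSet n k) : rUone n k {i} = 0 := by
  simpa [rUone] using rUone_union_singleton hi ∅

lemma rUone_isCircuitPattern {n k : ℕ} {i j : Fin n} (hi : i ∉ alphaSet n k)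
    (hj : j ∉ alphaSet n k) (A : Finset (Fin n)) : IsCircuitPattern (rUone n k) A i j := by
  constructor <;>
    simp only [rUone_union_singleton hi, rUone_union_singleton hj, rUone_singleton hi,
      rUone_singleton hj, add_zero]

lemma Finset.exists_subset_injOn_image_eq {α β : Type*} [DecidableEq β] (s : Finset α)
    (f : α → β) : ∃ t ⊆ s, Set.InjOn f t ∧ t.image f = s.image f := by
  obtain ⟨u, hus, hbij⟩ := Set.exists_subset_bijOn (s : Set α) f
  lift u to Finset α using s.finite_toSet.subset hus
  exact ⟨u, by exact_mod_cast hus, hbij.injOn, by exact_mod_cast hbij.image_eq⟩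

lemma PolymatroidRegion.sum_mem {n : ℕ} {ι : Type*} (s : Finset ι) {f : ι → Finset (Fin n) → ℝ}
    (hf : ∀ k ∈ s, f k ∈ PolymatroidRegion n) : ∑ k ∈ s, f k ∈ PolymatroidRegion n := by
  refine ⟨?_, fun A => ?_, fun A B hAB => ?_, fun A B => ?_⟩ <;> simp only [Finset.sum_apply]
  · exact sum_eq_zero fun k hk => (hf k hk).1
  · exact sum_nonneg fun k hk => (hf k hk).2.1 A
  · exact sum_le_sum fun k hk => (hf k hk).2.2.1 A B hAB
  · rw [← sum_add_distrib, ← sum_add_distrib]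
    exact sum_le_sum fun k hk => (hf k hk).2.2.2 A B

def hitIndicator {n : ℕ} (K : Finset (Fin n)) : Finset (Fin n) → ℝ :=
  fun A => if (A ∩ K).Nonempty then 1 else 0

lemma hitIndicator_mem {n : ℕ} (K : Finset (Fin n)) : hitIndicator K ∈ PolymatroidRegion n := by
  have hmono : ∀ {A B : Finset (Fin n)}, A ⊆ B → (A ∩ K).Nonempty → (B ∩ K).Nonempty :=
    fun h => Nonempty.mono (inter_subset_inter_right h)
  have hunion : ∀ A B : Finset (Fin n), ((A ∪ B) ∩ K).Nonempty →
      (A ∩ K).Nonempty ∨ (B ∩ K).Nonempty := fun A B => by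
    simp [union_inter_distrib_right, union_nonempty]
  refine ⟨by simp [hitIndicator], fun A => ?_, fun A B hAB => ?_, fun A B => ?_⟩ <;>
    unfold hitIndicator
  · split_ifs <;> norm_num
  · split_ifs with h1 h2 <;> norm_num
    exact h2 (hmono hAB h1)
  · have := @hmono (A ∩ B) A inter_subset_left
    have := @hmono (A ∩ B) B inter_subset_right
    have := hunion A B
    split_ifs <;> simp_all

namespace MatroidRk

variable {n : ℕ} (M : MatroidRk n)

lemma r_empty : M.r ∅ = 0 := Nat.le_zero.1 (by simpa using M.le_card ∅)

lemma r_singleton_eq_one {e : Fin n} (he : ¬ M.IsLoop e) : M.r {e} = 1 := by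
  have := M.le_card {e}
  simp only [IsLoop, card_singleton] at he this
  omega

lemma r_insert_eq_of_subset {e : Fin n} {S A : Finset (Fin n)} (hSA : S ⊆ A)
    (hS : M.r (insert e S) = M.r S) : M.r (insert e A) = M.r A := by
  have hsub := M.submod A (insert e S)
  rw [union_insert, union_eq_left.2 hSA] at hsub
  have h1 : M.r S ≤ M.r (A ∩ insert e S) := M.mono (subset_inter hSA (subset_insert e S))
  have h2 := M.mono (subset_insert e A)
  omega

lemma r_union_eq_of_forall_insert {T B : Finset (Fin n)}
    (hB : ∀ e ∈ B, M.r (insert e T) = M.r T) : M.r (T ∪ B) = M.r T := by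
  induction B using Finset.induction_on with
  | empty => simp
  | insert a B _ ih =>
    rw [union_insert, M.r_insert_eq_of_subset subset_union_left (hB a (mem_insert_self a B)),
      ih fun e he => hB e (mem_insert_of_mem he)]

lemma exists_isCircuit_subset {A : Finset (Fin n)} (hA : ¬ M.Indep A) :
    ∃ C ⊆ A, M.IsCircuit C := by
  induction A using Finset.strongInduction with
  | H A ih =>
    by_cases hmin : ∀ D ⊂ A, M.Indep D
    · exact ⟨A, Subset.rfl, hA, hmin⟩
    · push Not at hmin
      obtain ⟨D, hDA, hD⟩ := hmin
      obtain ⟨C, hCD, hC⟩ := ih D hDA hD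
      exact ⟨C, hCD.trans hDA.subset, hC⟩

namespace IsCircuit

variable {M} {C : Finset (Fin n)}

lemma r_union_singleton (hC : M.IsCircuit C) {S : Finset (Fin n)} {x : Fin n} (hx : x ∉ S)
    (hSC : S ∪ {x} ⊂ C) : M.r (S ∪ {x}) = M.r S + 1 := by
  rw [hC.2 _ hSC, hC.2 _ (subset_union_left.trans_ssubset hSC),
    card_union_of_disjoint (disjoint_singleton_right.2 hx), card_singleton]

lemma r_singleton_of_mem (hC : M.IsCircuit C) {x : Fin n} (hx : x ∈ C) (hC2 : 2 ≤ C.card) :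
    M.r {x} = 1 := by
  have hsub : {x} ⊂ C := Finset.ssubset_iff_subset_ne.2
    ⟨singleton_subset_iff.2 hx, fun h => by rw [← h, card_singleton] at hC2; omega⟩
  simpa [Indep] using hC.2 _ hsub

lemma r_eq_of_union_singleton (hC : M.IsCircuit C) {S : Finset (Fin n)} {x : Fin n} (hx : x ∉ S)
    (hSC : S ∪ {x} = C) : M.r C = M.r S := by
  have hS : S ⊂ C := hSC ▸ union_singleton x S ▸ ssubset_insert hx
  have hdep : M.r C ≠ C.card := hC.1
  have hcard : C.card = S.card + 1 := by
    rw [← hSC, card_union_of_disjoint (disjoint_singleton_right.2 hx), card_singleton]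
  have := M.le_card C
  have := M.mono hS.subset
  have := hC.2 S hS
  unfold Indep at this
  omega

theorem isCircuitPattern (hC : M.IsCircuit C) {i j : Fin n} (hi : i ∈ C) (hj : j ∈ C)
    (hij : i ≠ j) (hC3 : 3 ≤ C.card) : IsCircuitPattern M.rr (C \ {i, j}) i j := by
  set A := C \ {i, j}
  have hiA : i ∉ A := by simp [A]
  have hjA : j ∉ A := by simp [A]
  have hCij : A ∪ {i} ∪ {j} = C := by ext x; by_cases x = i <;> by_cases x = j <;> simp_all [A]
  have hCji : A ∪ {j} ∪ {i} = C := by rw [union_right_comm, hCij]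
  have hjAi : j ∉ A ∪ {i} := by simp [hjA, hij.symm]
  have hiAj : i ∉ A ∪ {j} := by simp [hiA, hij]
  have hAi : A ∪ {i} ⊂ C := hCij ▸ union_singleton j _ ▸ ssubset_insert hjAi
  have hAj : A ∪ {j} ⊂ C := hCji ▸ union_singleton i _ ▸ ssubset_insert hiAj
  have hpair : {i} ∪ {j} ⊂ C := by
    refine Finset.ssubset_iff_subset_ne.2 ⟨by simp [insert_subset_iff, hi, hj], fun h => ?_⟩
    have := card_union_le {i} {j}
    simp only [h, card_singleton] at this
    omega
  have hri := hC.r_singleton_of_mem hi (by omega)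
  have hrj := hC.r_singleton_of_mem hj (by omega)
  refine ⟨?_, ?_, ?_, ?_, ?_⟩ <;> simp only [rr]
  · rw [hC.r_union_singleton hiA hAi, hri]; push_cast; ring
  · rw [hC.r_union_singleton hjA hAj, hrj]; push_cast; ring
  · rw [hC.r_union_singleton (by simp [hij.symm]) hpair, hri, hrj]; push_cast; ring
  · rw [hCij, hC.r_eq_of_union_singleton hjAi hCij]
  · rw [hCji, hC.r_eq_of_union_singleton hiAj hCji]

end IsCircuit

lemma indep_of_forall_isCircuit_card_le_two (hsmall : ∀ C, M.IsCircuit C → C.card ≤ 2)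
    {T : Finset (Fin n)} (hloop : ∀ e ∈ T, ¬ M.IsLoop e)
    (hpar : ∀ e ∈ T, ∀ f ∈ T, ¬ M.Parallel e f) : M.Indep T := by
  by_contra hT
  obtain ⟨C, hCT, hC⟩ := M.exists_isCircuit_subset hT
  have hC2 := hsmall C hC
  interval_cases hcard : C.card
  · exact hC.1 (by simp [card_eq_zero.1 hcard, Indep, r_empty])
  · obtain ⟨e, rfl⟩ := card_eq_one.1 hcard
    exact hC.1 (by simp [Indep, M.r_singleton_eq_one (hloop e (hCT (mem_singleton_self e)))])
  · obtain ⟨e, f, hef, rfl⟩ := card_eq_two.1 hcard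
    have he := hC.r_singleton_of_mem (mem_insert_self e {f}) hcard.ge
    have hf := hC.r_singleton_of_mem (mem_insert_of_mem (mem_singleton_self f)) hcard.ge
    have hle := M.le_card {e, f}
    have hge : M.r {e} ≤ M.r {e, f} := M.mono (by simp)
    have hne : M.r {e, f} ≠ 2 := fun h => hC.1 (by rw [Indep, h, hcard])
    rw [hcard] at hle
    exact hpar e (hCT (by simp)) f (hCT (by simp)) ⟨hef, he, hf, by omega⟩

instance : DecidablePred M.IsLoop := fun e => inferInstanceAs (Decidable (M.r {e} = 0))

def parallelClass (e : Fin n) : Finset (Fin n) :=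
  univ.filter fun f => ¬ M.IsLoop f ∧ M.r {e, f} ≤ 1

def parallelClasses : Finset (Finset (Fin n)) :=
  (univ.filter fun e => ¬ M.IsLoop e).image M.parallelClass

lemma mem_parallelClass_self {e : Fin n} (he : ¬ M.IsLoop e) : e ∈ M.parallelClass e := by
  simp [parallelClass, he, M.r_singleton_eq_one he]

lemma r_pair_le_one_of_le_one {e f g : Fin n} (he : ¬ M.IsLoop e) (hef : M.r {e, f} ≤ 1)
    (heg : M.r {e, g} ≤ 1) : M.r {f, g} ≤ 1 := by
  have hsub := M.submod {e, f} {e, g}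
  have hinter : M.r {e} ≤ M.r ({e, f} ∩ {e, g}) := M.mono (by simp)
  have hunion : M.r {f, g} ≤ M.r ({e, f} ∪ {e, g}) := M.mono (by intro x; simp; tauto)
  have := M.r_singleton_eq_one he
  omega

lemma parallelClass_eq {e f : Fin n} (he : ¬ M.IsLoop e) (hf : f ∈ M.parallelClass e) :
    M.parallelClass f = M.parallelClass e := by
  simp only [parallelClass, mem_filter, mem_univ, true_and] at hf ⊢
  ext g
  simp only [mem_filter, mem_univ, true_and, and_congr_right_iff]
  refine fun _ => ⟨fun hfg => ?_, M.r_pair_le_one_of_le_one he hf.2⟩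
  exact pair_comm e g ▸ M.r_pair_le_one_of_le_one hf.1 hfg (pair_comm e f ▸ hf.2)

lemma Parallel.parallelClass_eq {e f : Fin n} (h : M.Parallel e f) :
    M.parallelClass e = M.parallelClass f := by
  have he : ¬ M.IsLoop e := by simp [IsLoop, h.2.1]
  have hf : ¬ M.IsLoop f := by simp [IsLoop, h.2.2.1]
  exact (M.parallelClass_eq he (by simp [parallelClass, hf, h.2.2.2])).symm

lemma r_insert_eq_of_isLoop {e : Fin n} (he : M.IsLoop e) (A : Finset (Fin n)) :
    M.r (insert e A) = M.r A :=
  M.r_insert_eq_of_subset (empty_subset A) (by simpa [r_empty, IsLoop] using he)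

lemma r_insert_eq_of_mem_parallelClass {e f : Fin n} {A : Finset (Fin n)} (hfA : f ∈ A)
    (hf : ¬ M.IsLoop f) (he : e ∈ M.parallelClass f) : M.r (insert e A) = M.r A := by
  refine M.r_insert_eq_of_subset (singleton_subset_iff.2 hfA) ?_
  have hle : M.r {e, f} ≤ 1 := pair_comm f e ▸ (mem_filter.1 he).2.2
  have := M.mono (subset_insert e ({f} : Finset (Fin n)))
  rw [M.r_singleton_eq_one hf] at this ⊢
  exact le_antisymm hle this

lemma image_parallelClass_filter_not_isLoop (A : Finset (Fin n)) :
    (A.filter fun e => ¬ M.IsLoop e).image M.parallelClass =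
      M.parallelClasses.filter fun K => (A ∩ K).Nonempty := by
  ext K
  simp only [parallelClasses, mem_image, mem_filter, mem_univ, true_and]
  constructor
  · rintro ⟨e, ⟨heA, he⟩, rfl⟩
    exact ⟨⟨e, he, rfl⟩, e, mem_inter.2 ⟨heA, M.mem_parallelClass_self he⟩⟩
  · rintro ⟨⟨e, he, rfl⟩, f, hf⟩
    obtain ⟨hfA, hfe⟩ := mem_inter.1 hf
    exact ⟨f, ⟨hfA, (mem_filter.1 hfe).2.1⟩, M.parallelClass_eq he hfe⟩

lemma r_eq_card_filter_parallelClasses (hsmall : ∀ C, M.IsCircuit C → C.card ≤ 2)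
    (A : Finset (Fin n)) :
    M.r A = (M.parallelClasses.filter fun K => (A ∩ K).Nonempty).card := by
  set L := A.filter fun e => ¬ M.IsLoop e
  obtain ⟨T, hTL, hinj, himage⟩ := L.exists_subset_injOn_image_eq M.parallelClass
  have hT : M.r T = T.card :=
    M.indep_of_forall_isCircuit_card_le_two hsmall (fun e he => (mem_filter.1 (hTL he)).2)
      fun e he f hf hpar => hpar.1 (hinj he hf hpar.parallelClass_eq)
  have hspan : M.r A = M.r T := by
    refine le_antisymm ?_ (M.mono (hTL.trans (filter_subset _ _)))
    calc M.r A ≤ M.r (T ∪ A) := M.mono subset_union_right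
      _ = M.r T := M.r_union_eq_of_forall_insert fun e heA => ?_
    by_cases he : M.IsLoop e
    · exact M.r_insert_eq_of_isLoop he T
    · have hmem : M.parallelClass e ∈ T.image M.parallelClass :=
        himage ▸ mem_image_of_mem _ (mem_filter.2 ⟨heA, he⟩)
      obtain ⟨f, hfT, hfe⟩ := mem_image.1 hmem
      exact M.r_insert_eq_of_mem_parallelClass hfT (mem_filter.1 (hTL hfT)).2
        (hfe ▸ M.mem_parallelClass_self he)
  rw [hspan, hT, ← card_image_of_injOn hinj, himage, M.image_parallelClass_filter_not_isLoop]

lemma rr_eq_sum_hitIndicator (hsmall : ∀ C, M.IsCircuit C → C.card ≤ 2) :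
    M.rr = ∑ K ∈ M.parallelClasses, hitIndicator K := by
  funext A
  rw [Finset.sum_apply, rr, M.r_eq_card_filter_parallelClasses hsmall A, card_filter]
  push_cast
  rfl

theorem exists_isCircuit_three_le_card (hrk : 2 ≤ M.r univ) (hext : SpansExtremeRay M.rr) :
    ∃ C, M.IsCircuit C ∧ 3 ≤ C.card := by
  by_contra! hsmall
  have hrr := M.rr_eq_sum_hitIndicator fun C hC => by have := hsmall C hC; omega
  obtain ⟨K, hK⟩ : M.parallelClasses.Nonempty := by
    by_contra! h
    have := congrFun hrr univ
    simp [h, rr] at this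
    omega
  obtain ⟨e, he, rfl⟩ := mem_image.1 hK
  have he : ¬ M.IsLoop e := (mem_filter.1 he).2
  -- the class of `e` splits off `r_M` as a summand of rank one
  obtain ⟨⟨c, -, hc⟩, -⟩ := hext.2.2 _ _ (hitIndicator_mem (M.parallelClass e))
    (PolymatroidRegion.sum_mem _ fun K _ => hitIndicator_mem K)
    ⟨1, zero_le_one, by rw [add_sum_erase _ _ hK, one_smul, hrr]⟩
  have hsingle := congrFun hc {e}
  have huniv := congrFun hc univ
  simp only [hitIndicator, Pi.smul_apply, smul_eq_mul, rr, M.r_singleton_eq_one he,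
    Nat.cast_one] at hsingle huniv
  rw [if_pos ⟨e, by simp [M.mem_parallelClass_self he]⟩] at hsingle huniv
  have : (2 : ℝ) ≤ M.r univ := by exact_mod_cast hrk
  nlinarith

end MatroidRk

lemma card_alphaSet_one_le (n : ℕ) : (alphaSet n 1).card ≤ 1 :=
  card_le_one.2 fun x hx y hy => Fin.ext (by simp [alphaSet] at hx hy; omega)

theorem stmt3_general (n : ℕ) (M : MatroidRk n) (hrk : 2 ≤ M.r Finset.univ)
    (hext : SpansExtremeRay M.rr) (a b : ℝ) (ha : 0 < a)
    (hent : IsEntropic (fun A => a * M.rr A + b * rUone n 1 A)) :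
    ∃ v : ℤ, 2 ≤ v ∧ a = Real.log (v : ℝ) := by
  obtain ⟨C, hC, hC3⟩ := M.exists_isCircuit_three_le_card hrk hext
  have hcard : 1 < (C \ alphaSet n 1).card := by
    have := le_card_sdiff (alphaSet n 1) C
    have := card_alphaSet_one_le n
    omega
  obtain ⟨i, hi, j, hj, hij⟩ := one_lt_card.1 hcard
  obtain ⟨hiC, hiα⟩ := mem_sdiff.1 hi
  obtain ⟨hjC, hjα⟩ := mem_sdiff.1 hj
  have hpat := (hC.isCircuitPattern hiC hjC hij hC3).linear_comb
    (rUone_isCircuitPattern hiα hjα _) a b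
  obtain ⟨v, hv⟩ := hpat.exists_eq_log hent
  have hav : a = log v := by
    simpa [MatroidRk.rr, hC.r_singleton_of_mem hjC (by omega), rUone_singleton hjα] using hv
  refine ⟨v, ?_, by exact_mod_cast hav⟩
  by_contra! hv2
  replace hv2 : v < 2 := by exact_mod_cast hv2
  interval_cases v <;> simp at hav <;> linarith

/-- for a matroid `M` of rank `≥ 2` spanning an extreme ray of `Γ_n`,
if `a·r_M + b·r_{U_{1,1}^n}` is entropic with `a, b > 0`, then `a = log v`
for some integer `v ≥ 2`. -/
theorem stmt3 (n : ℕ) (M : MatroidRk n) (hrk : 2 ≤ M.r Finset.univ)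
    (hext : SpansExtremeRay M.rr) (a b : ℝ) (ha : 0 < a) (hb : 0 < b)
    (hent : IsEntropic (fun A => a * M.rr A + b * rUone n 1 A)) :
    ∃ v : ℤ, 2 ≤ v ∧ a = Real.log (v : ℝ) :=
  stmt3_general n M hrk hext a b ha hent
end
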